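/- arXiv:2505.13580 — 3 statements merged into one kernel-verified Lean document; each statement's English description precedes it below -/
import Mathlib

section
/- Let J ≥ 1, let μ : Fin J → ℝ be the mean rewards of J arms, let j* be an index with μ j* = max_j μ j, and let Δmax = max_j (μ j* − μ j). Let p : Fin J → ℝ be a probability vector (p j ≥ 0, ∑_j p j = 1) with 0 < p j* ≤ 1. Then the expected single-step regret of playing an arm drawn from p satisfies μ j* − ∑_j (p j) · (μ j) ≤ Δmax · (1 − p j*) ≤ Δmax · (− Real.log (p j*)). (Paper's Proposition 2(a): the cross-entropy loss satisfies the surrogate property for the multi-armed bandits problem — the single-step regret is bounded by Δmax times the cross-entropy prediction loss −log p_{j*} of the optimal arm.) -/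
/-!
Writing the regret as `∑ⱼ pⱼ (μ j* − μ j)`, the term of the optimal arm vanishes and every
other gap is at most `Δmax`, so the regret is at most `Δmax · ∑_{j ≠ j*} pⱼ = Δmax (1 − p j*)`.
Since `Δmax ≥ 0`, the bound `1 − x ≤ −log x` then turns this into `Δmax` times the cross-entropy
loss `−log p j*`.
-/

open Finset

section WeightedSums

variable {ι : Type*} [Fintype ι] {p : ι → ℝ}

theorem sub_sum_mul_eq_sum_mul_sub (hp1 : ∑ j, p j = 1) (a : ℝ) (μ : ι → ℝ) :
    a - ∑ j, p j * μ j = ∑ j, p j * (a - μ j) := by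
  simp only [mul_sub, sum_sub_distrib, ← sum_mul, hp1, one_mul]

theorem sum_mul_le_mul_one_sub [DecidableEq ι] {g : ι → ℝ} {D : ℝ} (i : ι)
    (hp0 : ∀ j, 0 ≤ p j) (hp1 : ∑ j, p j = 1) (hgi : g i = 0) (hg : ∀ j, g j ≤ D) :
    ∑ j, p j * g j ≤ D * (1 - p i) :=
  calc ∑ j, p j * g j = ∑ j ∈ univ.erase i, p j * g j := by
        rw [← add_sum_erase _ _ (mem_univ i), hgi, mul_zero, zero_add]
    _ ≤ ∑ j ∈ univ.erase i, p j * D :=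
        sum_le_sum fun j _ => mul_le_mul_of_nonneg_left (hg j) (hp0 j)
    _ = D * (1 - p i) := by rw [← sum_mul, sum_erase_eq_sub (mem_univ i), hp1, mul_comm]

end WeightedSums

theorem Real.one_sub_le_neg_log {x : ℝ} (hx : 0 < x) : 1 - x ≤ -Real.log x := by
  linarith [Real.log_le_sub_one_of_pos hx]

theorem cross_entropy_surrogate_mab_general
    (J : ℕ) (μ : Fin J → ℝ)
    (jstar : Fin J)
    (Δmax : ℝ) (hΔ : IsGreatest (Set.range fun j => μ jstar - μ j) Δmax)
    (p : Fin J → ℝ) (hp0 : ∀ j, 0 ≤ p j) (hp1 : ∑ j, p j = 1)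
    (hps : 0 < p jstar) :
    μ jstar - ∑ j, p j * μ j ≤ Δmax * (1 - p jstar) ∧
    Δmax * (1 - p jstar) ≤ Δmax * (- Real.log (p jstar)) := by
  have hgap : ∀ j, μ jstar - μ j ≤ Δmax := fun j => hΔ.2 ⟨j, rfl⟩
  have hΔ0 : 0 ≤ Δmax := by simpa using hgap jstar
  refine ⟨?_, mul_le_mul_of_nonneg_left (Real.one_sub_le_neg_log hps) hΔ0⟩
  rw [sub_sum_mul_eq_sum_mul_sub hp1]
  exact sum_mul_le_mul_one_sub jstar hp0 hp1 (sub_self _) hgap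

/-- Paper's Proposition 2(a): the cross-entropy loss satisfies the surrogate property for
multi-armed bandits — the single-step expected regret of playing an arm drawn from the
probability vector `p` is bounded by `Δmax · (1 − p j*) ≤ Δmax · (− log (p j*))`. -/
theorem cross_entropy_surrogate_mab
    (J : ℕ) (hJ : 1 ≤ J) (μ : Fin J → ℝ)
    (jstar : Fin J) (hstar : ∀ j, μ j ≤ μ jstar)
    (Δmax : ℝ) (hΔ : IsGreatest (Set.range fun j => μ jstar - μ j) Δmax)
    (p : Fin J → ℝ) (hp0 : ∀ j, 0 ≤ p j) (hp1 : ∑ j, p j = 1)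
    (hps : 0 < p jstar) (hps1 : p jstar ≤ 1) :
    μ jstar - ∑ j, p j * μ j ≤ Δmax * (1 - p jstar) ∧
    Δmax * (1 - p jstar) ≤ Δmax * (- Real.log (p jstar)) :=
  cross_entropy_surrogate_mab_general J μ jstar Δmax hΔ p hp0 hp1 hps
end

section
/- Let h, l ≥ 0 and let ν be a probability measure on ℝ with ∫ |x| dν(x) < ∞. Define the expected newsvendor cost C(a) = ∫ (h · max (a − x) 0 + l · max (x − a) 0) dν(x). Then C is Lipschitz on ℝ with constant max h l, i.e. |C(a) − C(b)| ≤ max h l · |a − b| for all a, b ∈ ℝ; in particular, for any a* ∈ ℝ, C(a) − C(a*) ≤ max h l · |a − a*| for every a. (Paper's Proposition 2(c), newsvendor case: the absolute loss satisfies the surrogate property for the newsvendor problem — the single-step regret is bounded by max{h,l} times the absolute prediction loss |a − a*|.) -/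
/-!
For `h, l ≥ 0` the newsvendor loss `h (a − x)⁺ + l (x − a)⁺` equals `max (h (a − x)) (l (x − a))`,
a maximum of an `h`-Lipschitz and an `l`-Lipschitz function of `a`, hence `max h l`-Lipschitz
(rather than merely `(h + l)`-Lipschitz). Averaging over the demand `x` against a probability
measure preserves the Lipschitz constant.
-/

open MeasureTheory

theorem LipschitzWith.integral_of_forall {α Ω E : Type*} [PseudoMetricSpace α]
    [MeasurableSpace Ω] [NormedAddCommGroup E] [NormedSpace ℝ E]
    {μ : Measure Ω} [IsProbabilityMeasure μ] {f : α → Ω → E} {K : NNReal}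
    (hf : ∀ ω, LipschitzWith K (f · ω)) (hint : ∀ a, Integrable (f a) μ) :
    LipschitzWith K fun a => ∫ ω, f a ω ∂μ := by
  refine LipschitzWith.of_dist_le_mul fun a b => ?_
  rw [dist_eq_norm, ← integral_sub (hint a) (hint b)]
  simpa using norm_integral_le_of_norm_le_const (μ := μ)
    (Filter.Eventually.of_forall fun ω => by simpa [dist_eq_norm] using (hf ω).dist_le_mul a b)

theorem lipschitzWith_mul_sub_const (c x : ℝ) : LipschitzWith ‖c‖₊ fun a => c * (a - x) := by
  refine LipschitzWith.of_dist_le_mul fun a b => ?_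
  rw [Real.dist_eq, Real.dist_eq, ← mul_sub, sub_sub_sub_cancel_right, abs_mul, coe_nnnorm,
    Real.norm_eq_abs]

theorem lipschitzWith_mul_const_sub (c x : ℝ) : LipschitzWith ‖c‖₊ fun a => c * (x - a) := by
  convert lipschitzWith_mul_sub_const (-c) x using 1
  · rw [nnnorm_neg]
  · ext a
    ring

theorem newsvendor_loss_eq_max {h l : ℝ} (hh : 0 ≤ h) (hl : 0 ≤ l) (a x : ℝ) :
    h * max (a - x) 0 + l * max (x - a) 0 = max (h * (a - x)) (l * (x - a)) := by
  rcases le_total x a with hxa | hax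
  · rw [max_eq_left (sub_nonneg.2 hxa), max_eq_right (sub_nonpos.2 hxa),
      max_eq_left (by nlinarith)]
    ring
  · rw [max_eq_right (sub_nonpos.2 hax), max_eq_left (sub_nonneg.2 hax),
      max_eq_right (by nlinarith)]
    ring

theorem integrable_newsvendor_loss {h l : ℝ} {ν : Measure ℝ} [IsFiniteMeasure ν]
    (hint : Integrable (fun x => |x|) ν) (a : ℝ) :
    Integrable (fun x => max (h * (a - x)) (l * (x - a))) ν := by
  have hid : Integrable id ν := (integrable_norm_iff aestronglyMeasurable_id).1 hint
  exact (((integrable_const a).sub hid).const_mul h).sup ((hid.sub (integrable_const a)).const_mul l)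

/-- Paper's Proposition 2(c), newsvendor case: the expected newsvendor cost
`C(a) = ∫ (h (a − x)⁺ + l (x − a)⁺) dν(x)` is `max h l`-Lipschitz; in particular the
single-step regret `C(a) − C(a*)` is bounded by `max h l · |a − a*|`. -/
theorem absolute_loss_surrogate_newsvendor
    (h l : ℝ) (hh : 0 ≤ h) (hl : 0 ≤ l)
    (ν : Measure ℝ) [IsProbabilityMeasure ν]
    (hint : Integrable (fun x => |x|) ν)
    (C : ℝ → ℝ)
    (hC : ∀ a, C a = ∫ x, (h * max (a - x) 0 + l * max (x - a) 0) ∂ν) :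
    (∀ a b : ℝ, |C a - C b| ≤ max h l * |a - b|) ∧
    ∀ astar a : ℝ, C a - C astar ≤ max h l * |a - astar| := by
  have hCmax : C = fun a => ∫ x, max (h * (a - x)) (l * (x - a)) ∂ν := by
    funext a
    simp only [hC, newsvendor_loss_eq_max hh hl]
  have hlip : LipschitzWith (max ‖h‖₊ ‖l‖₊) C := hCmax ▸
    LipschitzWith.integral_of_forall
      (fun x => (lipschitzWith_mul_sub_const h x).max (lipschitzWith_mul_const_sub l x))
      (integrable_newsvendor_loss hint)
  have hdist (a b : ℝ) : |C a - C b| ≤ max h l * |a - b| := by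
    simpa [Real.dist_eq, abs_of_nonneg hh, abs_of_nonneg hl] using hlip.dist_le_mul a b
  exact ⟨hdist, fun astar a => (le_abs_self _).trans (hdist a astar)⟩
end

section
/- Let φ(x) = (2π)^{−1/2} exp(−x²/2) be the standard Gaussian density, and let w₁ = (1,0), w₂ = (0,1) ∈ ℝ². Given an arbitrary sequence of observations O₁, O₂, … ∈ ℝ, define recursively: p₁ = 1/2, a_t = p_t • w₁ + (1 − p_t) • w₂ = (p_t, 1 − p_t), and p_{t+1} = p_t · φ(O_t − ⟨w₁, a_t⟩) / (p_t · φ(O_t − ⟨w₁, a_t⟩) + (1 − p_t) · φ(O_t − ⟨w₂, a_t⟩)). Then for every t ≥ 1, p_t = 1/2 and a_t = (1/2, 1/2); consequently, for each i ∈ {1, 2} and every horizon T ≥ 1, the cumulative regret satisfies ∑_{t=1}^T ((sup_{a ∈ [−1,1]×[−1,1]} ⟨w_i, a⟩) − ⟨w_i, a_t⟩) = T/2. (Paper's Proposition 3, linear bandits instance: the Bayes-optimal decision function Alg* under the squared loss — posterior averaging — incurs regret Ω(T) linear in the horizon in this two-environment linear bandit instance, for every environment.) -/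
/-!
When the action `a` is chosen so that `⟨w₁, a⟩ = ⟨w₂, a⟩`, both environments assign the same
likelihood to every observation, so Bayes' rule leaves the posterior unchanged. Starting from the
uniform prior, posterior averaging therefore plays `(1/2, 1/2)` forever, which earns `1/2` per
round in either environment while the best action in the box `[-1,1]²` earns `1`.
-/

open ProbabilityTheory

lemma gaussianPDFReal_zero_one_apply (x : ℝ) :
    gaussianPDFReal 0 1 x = (Real.sqrt (2 * Real.pi))⁻¹ * Real.exp (-(x ^ 2) / 2) := by
  simp [gaussianPDFReal]

lemma bayes_update_eq_self_of_likelihood_eq {p L : ℝ} (hL : L ≠ 0) :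
    p * L / (p * L + (1 - p) * L) = p := by
  rw [← add_mul, add_sub_cancel, one_mul, mul_div_cancel_right₀ p hL]

lemma isGreatest_mul_image_Icc_neg_one_one (c : ℝ) :
    IsGreatest ((c * ·) '' Set.Icc (-1) 1) |c| := by
  refine ⟨?_, ?_⟩
  · rcases le_total 0 c with hc | hc
    · exact ⟨1, by norm_num, by simp [abs_of_nonneg hc]⟩
    · exact ⟨-1, by norm_num, by simp [abs_of_nonpos hc]⟩
  · rintro _ ⟨s, hs, rfl⟩
    calc c * s ≤ |c| * |s| := abs_mul c s ▸ le_abs_self _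
      _ ≤ |c| * 1 := by gcongr; exact abs_le.mpr hs
      _ = |c| := mul_one _

lemma isGreatest_dotProduct_image_Icc_prod_Icc (w : ℝ × ℝ) :
    IsGreatest ((fun x : ℝ × ℝ => w.1 * x.1 + w.2 * x.2) ''
      (Set.Icc (-1 : ℝ) 1 ×ˢ Set.Icc (-1 : ℝ) 1)) (|w.1| + |w.2|) := by
  obtain ⟨⟨s₁, hs₁, hw₁⟩, hle₁⟩ := isGreatest_mul_image_Icc_neg_one_one w.1
  obtain ⟨⟨s₂, hs₂, hw₂⟩, hle₂⟩ := isGreatest_mul_image_Icc_neg_one_one w.2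
  refine ⟨⟨(s₁, s₂), ⟨hs₁, hs₂⟩, by simp only [hw₁, hw₂]⟩, ?_⟩
  rintro _ ⟨x, ⟨hx₁, hx₂⟩, rfl⟩
  exact add_le_add (hle₁ ⟨x.1, hx₁, rfl⟩) (hle₂ ⟨x.2, hx₂, rfl⟩)

/-- Paper's Proposition 3, linear bandits instance: posterior averaging (the
Bayes-optimal decision under squared loss) keeps the posterior frozen at `1/2`, plays
`(1/2, 1/2)` forever, and incurs cumulative regret `T/2` in every environment of the
two-environment linear bandit instance with `w₁ = (1,0)`, `w₂ = (0,1)` and action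
space `[−1,1] × [−1,1]`. -/
theorem posterior_averaging_linear_regret_linear_bandits
    (φ : ℝ → ℝ) (hφ : ∀ x, φ x = (Real.sqrt (2 * Real.pi))⁻¹ * Real.exp (-(x ^ 2) / 2))
    (w : Fin 2 → ℝ × ℝ) (hw0 : w 0 = (1, 0)) (hw1 : w 1 = (0, 1))
    (inner2 : ℝ × ℝ → ℝ × ℝ → ℝ)
    (hinner : ∀ u v, inner2 u v = u.1 * v.1 + u.2 * v.2)
    (O : ℕ → ℝ) (p : ℕ → ℝ) (a : ℕ → ℝ × ℝ)
    (hp1 : p 1 = 1 / 2)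
    (ha : ∀ t, 1 ≤ t → a t = (p t, 1 - p t))
    (hrec : ∀ t, 1 ≤ t →
      p (t + 1) = p t * φ (O t - inner2 (w 0) (a t)) /
        (p t * φ (O t - inner2 (w 0) (a t)) + (1 - p t) * φ (O t - inner2 (w 1) (a t)))) :
    (∀ t, 1 ≤ t → p t = 1 / 2 ∧ a t = (1 / 2, 1 / 2)) ∧
    ∀ i : Fin 2, ∀ T : ℕ, 1 ≤ T →
      ∑ t ∈ Finset.Icc 1 T,
        (sSup ((fun x : ℝ × ℝ => inner2 (w i) x) ''
            (Set.Icc (-1 : ℝ) 1 ×ˢ Set.Icc (-1 : ℝ) 1)) - inner2 (w i) (a t))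
        = (T : ℝ) / 2 := by
  have hφ_ne : ∀ x, φ x ≠ 0 := fun x =>
    (hφ x ▸ gaussianPDFReal_zero_one_apply x ▸ gaussianPDFReal_pos 0 1 x one_ne_zero).ne'
  have hp : ∀ t, 1 ≤ t → p t = 1 / 2 := by
    refine Nat.le_induction hp1 fun t ht ih => ?_
    have hsame_reward : inner2 (w 1) (a t) = inner2 (w 0) (a t) := by
      rw [hinner, hinner, ha t ht, ih, hw0, hw1]; norm_num
    rw [hrec t ht, hsame_reward, bayes_update_eq_self_of_likelihood_eq (hφ_ne _), ih]
  have hplay : ∀ t, 1 ≤ t → p t = 1 / 2 ∧ a t = (1 / 2, 1 / 2) := fun t ht =>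
    ⟨hp t ht, by rw [ha t ht, hp t ht]; norm_num⟩
  refine ⟨hplay, fun i T _ => ?_⟩
  have hregret : ∀ t ∈ Finset.Icc 1 T,
      sSup ((fun x : ℝ × ℝ => inner2 (w i) x) ''
        (Set.Icc (-1 : ℝ) 1 ×ˢ Set.Icc (-1 : ℝ) 1)) - inner2 (w i) (a t) = 1 / 2 := by
    intro t ht
    simp only [hinner]
    rw [(isGreatest_dotProduct_image_Icc_prod_Icc (w i)).csSup_eq,
      (hplay t (Finset.mem_Icc.mp ht).1).2]
    fin_cases i <;> norm_num [hw0, hw1]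
  rw [Finset.sum_congr rfl hregret, Finset.sum_const, Nat.card_Icc, Nat.add_sub_cancel,
    nsmul_eq_mul, mul_one_div]
end
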